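/- arXiv:2507.21932 — 2 statements merged into one kernel-verified Lean document; each statement's English description precedes it below -/
import Mathlib

section
/- (Weyl–Minkowski theorem.) A nonempty set P ⊆ ℝⁿ admits an H-representation, i.e., there exist m ∈ ℕ, a real m×n matrix A and b ∈ ℝ^m with P = {x ∈ ℝⁿ : A·x ≤ b}, if and only if it admits a V-representation, i.e., there exist a nonempty finite set V ⊆ ℝⁿ and a finite set R ⊆ ℝⁿ such that P is the Minkowski sum of the convex hull of V and the set of all nonnegative linear combinations of elements of R: P = convexHull(V) + { Σ_{r ∈ R} μ_r r : μ_r ≥ 0 for all r ∈ R }. -/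
open Matrix Set Pointwise

section FM

variable {E F : Type} [AddCommGroup E] [Module ℝ E] [AddCommGroup F] [Module ℝ F]

/-- H-polyhedron predicate: the set is cut out by finitely many linear inequalities. -/
def IsH (P : Set E) : Prop :=
  ∃ (ι : Type) (_ : Fintype ι) (f : ι → E →ₗ[ℝ] ℝ) (b : ι → ℝ),
    P = {x | ∀ i, f i x ≤ b i}

lemma isH_single (f : E →ₗ[ℝ] ℝ) (b : ℝ) : IsH {x | f x ≤ b} := by
  refine ⟨Unit, inferInstance, fun _ => f, fun _ => b, ?_⟩
  ext x; simp

lemma isH_inter {S T : Set E} (hS : IsH S) (hT : IsH T) : IsH (S ∩ T) := by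
  obtain ⟨ι, _, f, b, rfl⟩ := hS
  obtain ⟨κ, _, g, c, rfl⟩ := hT
  refine ⟨ι ⊕ κ, inferInstance, Sum.elim f g, Sum.elim b c, ?_⟩
  ext x
  simp [Sum.forall, forall_and]

lemma isH_iInter {ι : Type} [Fintype ι] {S : ι → Set E} (h : ∀ i, IsH (S i)) :
    IsH (⋂ i, S i) := by
  choose κ inst f b hS using h
  refine ⟨Σ i, κ i, inferInstance, fun p => f p.1 p.2, fun p => b p.1 p.2, ?_⟩
  ext x
  simp only [Set.mem_iInter, Sigma.forall, Set.mem_setOf_eq]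
  exact forall_congr' fun i => by rw [hS i]; rfl

lemma isH_comap {S : Set F} (hS : IsH S) (L : E →ₗ[ℝ] F) : IsH (L ⁻¹' S) := by
  obtain ⟨ι, _, f, b, rfl⟩ := hS
  exact ⟨ι, inferInstance, fun i => (f i).comp L, b, rfl⟩

lemma isH_map_equiv {S : Set E} (hS : IsH S) (e : E ≃ₗ[ℝ] F) : IsH (e '' S) := by
  have : (e : E → F) '' S = (e.symm : F →ₗ[ℝ] E) ⁻¹' S := by
    ext y
    simp only [Set.mem_image, Set.mem_preimage, LinearEquiv.coe_coe]
    constructor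
    · rintro ⟨x, hx, rfl⟩; simpa using hx
    · intro h; exact ⟨e.symm y, h, by simp⟩
  rw [this]
  exact isH_comap hS _

/-- One-variable interval compatibility: if every lower bound is below every upper
bound, there is a point between them. -/
lemma exists_between_bounds {ι : Type} [Fintype ι] (c v : ι → ℝ)
    (h : ∀ i j, 0 < c i → c j < 0 → v j ≤ v i) :
    ∃ t : ℝ, ∀ i, (0 < c i → t ≤ v i) ∧ (c i < 0 → v i ≤ t) := by
  classical
  set U : Finset ι := Finset.univ.filter (fun i => 0 < c i) with hU
  set L : Finset ι := Finset.univ.filter (fun i => c i < 0) with hL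
  by_cases hUne : U.Nonempty
  · refine ⟨U.inf' hUne v, fun i => ⟨fun hi => ?_, fun hi => ?_⟩⟩
    · exact Finset.inf'_le v (by simp [hU, hi])
    · obtain ⟨j, hjU, hj⟩ := Finset.exists_mem_eq_inf' hUne v
      rw [hj]
      exact h j i (by simpa [hU] using hjU) hi
  · by_cases hLne : L.Nonempty
    · refine ⟨L.sup' hLne v, fun i => ⟨fun hi => ?_, fun hi => ?_⟩⟩
      · exact absurd (Finset.mem_filter.mpr ⟨Finset.mem_univ i, hi⟩) (by
          intro hmem; exact hUne ⟨i, hmem⟩)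
      · exact Finset.le_sup' v (by simp [hL, hi])
    · refine ⟨0, fun i => ⟨fun hi => ?_, fun hi => ?_⟩⟩
      · exact absurd ⟨i, by simp [hU, hi]⟩ hUne
      · exact absurd ⟨i, by simp [hL, hi]⟩ hLne

/-- Fourier–Motzkin elimination of one real variable. -/
lemma isH_elim {S : Set (ℝ × E)} (hS : IsH S) : IsH {x : E | ∃ t, (t, x) ∈ S} := by
  classical
  obtain ⟨ι, _, f, b, rfl⟩ := hS
  set c : ι → ℝ := fun i => f i (1, 0) with hc
  set g : ι → E →ₗ[ℝ] ℝ := fun i => (f i).comp (LinearMap.inr ℝ ℝ E) with hg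
  have hdec : ∀ (i : ι) (t : ℝ) (x : E), f i (t, x) = t * c i + g i x := by
    intro i t x
    have h1 : (t, x) = t • ((1:ℝ), (0:E)) + ((0:ℝ), x) := by simp [Prod.ext_iff]
    rw [h1, map_add, _root_.map_smul]
    simp [hc, hg, smul_eq_mul]
  refine ⟨ι ⊕ ι × ι, inferInstance,
    Sum.elim (fun i => if c i = 0 then g i else 0)
      (fun p => if 0 < c p.1 ∧ c p.2 < 0 then c p.1 • g p.2 - c p.2 • g p.1 else 0),
    Sum.elim (fun i => if c i = 0 then b i else 0)
      (fun p => if 0 < c p.1 ∧ c p.2 < 0 then c p.1 * b p.2 - c p.2 * b p.1 else 0), ?_⟩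
  ext x
  simp only [Set.mem_setOf_eq, Sum.forall, Sum.elim_inl, Sum.elim_inr, Prod.forall]
  constructor
  · rintro ⟨t, ht⟩
    constructor
    · intro i
      by_cases hci : c i = 0
      · have h1 := ht i; rw [hdec, hci] at h1
        simp only [if_pos hci]
        linarith
      · simp [hci]
    · intro i j
      by_cases hij : 0 < c i ∧ c j < 0
      · simp only [if_pos hij, LinearMap.sub_apply, LinearMap.smul_apply, smul_eq_mul]
        have h1 := ht i; have h2 := ht j
        rw [hdec] at h1 h2
        nlinarith [hij.1, hij.2]
      · simp [hij]
  · rintro ⟨h0, hpair⟩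
    have key : ∀ i j, 0 < c i → c j < 0 →
        (b j - g j x) / c j ≤ (b i - g i x) / c i := by
      intro i j hi hj
      have hp := hpair i j
      simp only [if_pos (show 0 < c i ∧ c j < 0 from ⟨hi, hj⟩)] at hp
      simp only [LinearMap.sub_apply, LinearMap.smul_apply, smul_eq_mul] at hp
      rw [div_le_iff_of_neg hj, div_mul_eq_mul_div, div_le_iff₀ hi]
      nlinarith
    obtain ⟨t, ht⟩ := exists_between_bounds c (fun i => (b i - g i x) / c i) key
    refine ⟨t, fun i => ?_⟩
    show f i (t, x) ≤ b i
    rw [hdec]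
    rcases lt_trichotomy (c i) 0 with hci | hci | hci
    · have h2 := (ht i).2 hci
      rw [div_le_iff_of_neg hci] at h2
      linarith
    · have h1 := h0 i
      simp only [if_pos hci] at h1
      rw [hci]; linarith
    · have h2 := (ht i).1 hci
      rw [le_div_iff₀ hci] at h2
      linarith

/-- Splitting off the first coordinate of `Fin (k+1) → ℝ`. -/
noncomputable def splitEquiv (k : ℕ) (E : Type) [AddCommGroup E] [Module ℝ E] :
    ((Fin (k + 1) → ℝ) × E) ≃ₗ[ℝ] ℝ × ((Fin k → ℝ) × E) where
  toFun p := (p.1 0, (fun i => p.1 i.succ, p.2))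
  invFun p := (Fin.cons p.1 p.2.1, p.2.2)
  map_add' a b := rfl
  map_smul' c a := rfl
  left_inv p := by
    refine Prod.ext ?_ rfl
    exact Fin.cons_self_tail p.1
  right_inv p := by
    refine Prod.ext (by simp) (Prod.ext ?_ rfl)
    funext i; simp

/-- Elimination of a block of variables. -/
lemma isH_elim_many {k : ℕ} {S : Set ((Fin k → ℝ) × E)} (hS : IsH S) :
    IsH {x : E | ∃ w, (w, x) ∈ S} := by
  induction k with
  | zero =>
    have h : {x : E | ∃ w, (w, x) ∈ S} = (LinearMap.inr ℝ (Fin 0 → ℝ) E) ⁻¹' S := by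
      ext x
      constructor
      · rintro ⟨w, hw⟩
        simpa [Subsingleton.elim (0 : Fin 0 → ℝ) w] using hw
      · intro h; exact ⟨0, h⟩
    rw [h]; exact isH_comap hS _
  | succ k ih =>
    set e := splitEquiv k E
    have h2 : IsH {p : (Fin k → ℝ) × E | ∃ t, (t, p) ∈ (e : _ → _) '' S} :=
      isH_elim (isH_map_equiv hS e)
    have h3 := ih h2
    have hset : {x : E | ∃ w, (w, x) ∈ S} =
        {x : E | ∃ w, (w, x) ∈ {p : (Fin k → ℝ) × E | ∃ t, (t, p) ∈ (e : _ → _) '' S}} := by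
      ext x
      constructor
      · rintro ⟨w, hw⟩
        exact ⟨fun i => w i.succ, w 0, ⟨(w, x), hw, rfl⟩⟩
      · rintro ⟨w, t, p, hp, hep⟩
        have hps : p = e.symm (t, (w, x)) := by
          have := congrArg e.symm hep
          simpa using this
        refine ⟨Fin.cons t w, ?_⟩
        rw [hps] at hp
        exact hp
    rw [hset]; exact h3

end FM

section Cones

def coneOf {N q : ℕ} (g : Fin q → (Fin N → ℝ)) : Set (Fin N → ℝ) :=
  {x | ∃ μ : Fin q → ℝ, (∀ k, 0 ≤ μ k) ∧ x = ∑ k, μ k • g k}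

lemma dot_sum_smul {N q : ℕ} (a : Fin N → ℝ) (μ : Fin q → ℝ) (g : Fin q → (Fin N → ℝ)) :
    a ⬝ᵥ (∑ k, μ k • g k) = ∑ k, μ k * (a ⬝ᵥ g k) := by
  simp only [dotProduct, Finset.sum_apply, Pi.smul_apply, smul_eq_mul, Finset.mul_sum]
  rw [Finset.sum_comm]
  exact Finset.sum_congr rfl fun k _ => Finset.sum_congr rfl fun j _ => by ring

lemma mem_coneOf_self {N q : ℕ} (g : Fin q → (Fin N → ℝ)) (k : Fin q) : g k ∈ coneOf g := by
  classical
  refine ⟨fun j => if j = k then 1 else 0, fun j => by positivity, ?_⟩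
  simp [ite_smul]

lemma isH_coneOf {N q : ℕ} (g : Fin q → (Fin N → ℝ)) : IsH (coneOf g) := by
  classical
  set fst := LinearMap.fst ℝ (Fin q → ℝ) (Fin N → ℝ) with hfst
  set snd := LinearMap.snd ℝ (Fin q → ℝ) (Fin N → ℝ) with hsnd
  set eqf : Fin N → ((Fin q → ℝ) × (Fin N → ℝ)) →ₗ[ℝ] ℝ :=
    fun l => (LinearMap.proj l).comp snd - ∑ k, g k l • ((LinearMap.proj k).comp fst) with heqf
  set T : Set ((Fin q → ℝ) × (Fin N → ℝ)) :=
    (⋂ i, {p | (-(((LinearMap.proj i).comp fst) : _ →ₗ[ℝ] ℝ)) p ≤ 0}) ∩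
      ((⋂ l, {p | eqf l p ≤ 0}) ∩ (⋂ l, {p | (-(eqf l)) p ≤ 0})) with hT
  have hTH : IsH T :=
    isH_inter (isH_iInter fun i => isH_single _ _)
      (isH_inter (isH_iInter fun l => isH_single _ _) (isH_iInter fun l => isH_single _ _))
  have h2 := isH_elim_many hTH
  have hset : coneOf g = {x | ∃ w, (w, x) ∈ T} := by
    ext x
    simp only [coneOf, Set.mem_setOf_eq, hT, Set.mem_inter_iff, Set.mem_iInter,
      LinearMap.neg_apply, LinearMap.coe_comp, Function.comp_apply, LinearMap.proj_apply,
      hfst, hsnd, LinearMap.fst_apply, LinearMap.snd_apply, heqf, LinearMap.sub_apply,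
      LinearMap.coe_sum, Finset.sum_apply, LinearMap.smul_apply, smul_eq_mul,
      neg_nonpos, neg_sub, sub_nonpos, tsub_le_iff_right, zero_add]
    constructor
    · rintro ⟨μ, hμ, rfl⟩
      refine ⟨μ, hμ, fun l => ?_, fun l => ?_⟩ <;>
      · simp only [Finset.sum_apply, Pi.smul_apply, smul_eq_mul]
        exact le_of_eq (Finset.sum_congr rfl fun k _ => by ring)
    · rintro ⟨w, h1, hle, hge⟩
      refine ⟨w, h1, funext fun l => ?_⟩
      have ha := hle l; have hb := hge l
      simp only [Finset.sum_apply, Pi.smul_apply, smul_eq_mul]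
      have hcomm : (∑ k, w k * g k l) = ∑ k, g k l * w k :=
        Finset.sum_congr rfl fun k _ => by ring
      rw [hcomm]; linarith
  rw [hset]; exact h2

lemma isH_to_dot {N : ℕ} {P : Set (Fin N → ℝ)} (hP : IsH P) :
    ∃ (m : ℕ) (a : Fin m → (Fin N → ℝ)) (b : Fin m → ℝ),
      P = {x | ∀ i, a i ⬝ᵥ x ≤ b i} := by
  classical
  obtain ⟨ι, inst, f, b, rfl⟩ := hP
  set e := Fintype.equivFin ι with he
  refine ⟨Fintype.card ι, fun i j => f (e.symm i) (fun j' => if j = j' then 1 else 0),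
    fun i => b (e.symm i), ?_⟩
  have key : ∀ (i : Fin (Fintype.card ι)) (x : Fin N → ℝ),
      (fun j => f (e.symm i) fun j' => if j = j' then 1 else 0) ⬝ᵥ x = f (e.symm i) x := by
    intro i x
    rw [LinearMap.pi_apply_eq_sum_univ (f (e.symm i)) x]
    simp only [dotProduct, smul_eq_mul]
    exact Finset.sum_congr rfl fun j _ => by ring
  ext x
  simp only [Set.mem_setOf_eq]
  constructor
  · intro h i; rw [key]; exact h _
  · intro h i
    have := h (e i)
    rw [key] at this
    simpa using this

lemma cone_rhs_zero {N m : ℕ} {P : Set (Fin N → ℝ)} (h0 : (0 : Fin N → ℝ) ∈ P)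
    (hsmul : ∀ t : ℝ, 0 < t → ∀ x ∈ P, t • x ∈ P)
    (a : Fin m → (Fin N → ℝ)) (b : Fin m → ℝ) (hP : P = {x | ∀ i, a i ⬝ᵥ x ≤ b i}) :
    P = {x | ∀ i, a i ⬝ᵥ x ≤ 0} := by
  have hb : ∀ i, 0 ≤ b i := by
    intro i
    have := hP ▸ h0
    simpa using this i
  ext x
  constructor
  · intro hx i
    by_contra hcon
    push_neg at hcon
    set d := a i ⬝ᵥ x with hd
    set t := b i / d + 1 with ht
    have hdiv : 0 ≤ b i / d := div_nonneg (hb i) hcon.le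
    have htpos : 0 < t := by rw [ht]; linarith
    have := hP ▸ hsmul t htpos x hx
    have h2 : a i ⬝ᵥ (t • x) ≤ b i := this i
    rw [dotProduct_smul] at h2
    have : t * d ≤ b i := by simpa [hd] using h2
    rw [ht] at this
    have hbd : b i / d * d = b i := div_mul_cancel₀ _ (ne_of_gt hcon)
    nlinarith
  · intro hx
    rw [hP]
    intro i
    exact le_trans (hx i) (hb i)

lemma cone_poly {N q : ℕ} (g : Fin q → (Fin N → ℝ)) :
    ∃ (m : ℕ) (c : Fin m → (Fin N → ℝ)), coneOf g = {y | ∀ j, c j ⬝ᵥ y ≤ 0} := by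
  obtain ⟨m, a, b, hab⟩ := isH_to_dot (isH_coneOf g)
  have h0 : (0 : Fin N → ℝ) ∈ coneOf g := ⟨0, fun k => le_refl 0, by simp⟩
  refine ⟨m, a, cone_rhs_zero h0 ?_ a b hab⟩
  rintro t ht x ⟨μ, hμ, rfl⟩
  exact ⟨fun k => t * μ k, fun k => mul_nonneg ht.le (hμ k), by
    rw [Finset.smul_sum]
    exact Finset.sum_congr rfl fun k _ => (smul_smul t (μ k) (g k))⟩

lemma cone_fg {N m : ℕ} (a : Fin m → (Fin N → ℝ)) :
    ∃ (q : ℕ) (g : Fin q → (Fin N → ℝ)), {x | ∀ i, a i ⬝ᵥ x ≤ 0} = coneOf g := by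
  obtain ⟨q, c, hc⟩ := cone_poly a
  obtain ⟨s, d, hd⟩ := cone_poly c
  have hca : ∀ j i, c j ⬝ᵥ a i ≤ 0 := by
    intro j i
    have : a i ∈ coneOf a := mem_coneOf_self a i
    rw [hc] at this
    exact this j
  refine ⟨q, c, ?_⟩
  ext x
  simp only [Set.mem_setOf_eq]
  constructor
  · intro hx
    by_contra hxc
    rw [hd] at hxc
    simp only [Set.mem_setOf_eq, not_forall, not_le] at hxc
    obtain ⟨l, hl⟩ := hxc
    have hdl : d l ∈ coneOf a := by
      rw [hc]
      intro j
      have hcj : c j ∈ coneOf c := mem_coneOf_self c j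
      rw [hd] at hcj
      rw [dotProduct_comm]
      exact hcj l
    obtain ⟨μ, hμ, hμe⟩ := hdl
    have : d l ⬝ᵥ x ≤ 0 := by
      rw [hμe, dotProduct_comm, dot_sum_smul]
      refine Finset.sum_nonpos fun k _ => mul_nonpos_of_nonneg_of_nonpos (hμ k) ?_
      rw [dotProduct_comm]
      exact hx k
    linarith
  · rintro ⟨μ, hμ, rfl⟩ i
    rw [dot_sum_smul]
    exact Finset.sum_nonpos fun k _ =>
      mul_nonpos_of_nonneg_of_nonpos (hμ k) (by rw [dotProduct_comm]; exact hca k i)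

end Cones

section Main

variable {n : ℕ}

lemma finset_sum_eq {α M : Type*} [AddCommMonoid M] (s : Finset α) (f : α → M) :
    ∑ y ∈ s, f y = ∑ i, f (s.equivFin.symm i) := by
  rw [← Finset.sum_coe_sort s f]
  exact (Equiv.sum_comp s.equivFin.symm fun z => f ↑z).symm

lemma dite_key {β : Type*} (V : Finset β) (lam : Fin V.card → ℝ) (w : β → ℝ)
    (hw : ∀ y (h : y ∈ V), w y = lam (V.equivFin ⟨y, h⟩)) (i : Fin V.card) :
    w ↑(V.equivFin.symm i) = lam i := by
  rw [hw _ (V.equivFin.symm i).2, Subtype.coe_eta, Equiv.apply_symm_apply]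

lemma convexHull_finset_eq (V : Finset (Fin n → ℝ)) :
    convexHull ℝ (V : Set (Fin n → ℝ)) =
      {x | ∃ lam : Fin V.card → ℝ, (∀ i, 0 ≤ lam i) ∧ (∑ i, lam i) = 1 ∧
        x = ∑ i, lam i • (V.equivFin.symm i : Fin n → ℝ)} := by
  classical
  ext x
  rw [Finset.mem_convexHull']
  simp only [Set.mem_setOf_eq]
  constructor
  · rintro ⟨w, hw0, hw1, hwx⟩
    refine ⟨fun i => w ↑(V.equivFin.symm i), fun i => hw0 _ (V.equivFin.symm i).2, ?_, ?_⟩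
    · rw [finset_sum_eq V w] at hw1; exact hw1
    · rw [finset_sum_eq V (fun y => w y • y)] at hwx; exact hwx.symm
  · rintro ⟨lam, h0, h1, rfl⟩
    refine ⟨fun y => if h : y ∈ V then lam (V.equivFin ⟨y, h⟩) else 0, ?_, ?_, ?_⟩
    · intro y hy
      show (0:ℝ) ≤ if h : y ∈ V then lam (V.equivFin ⟨y, h⟩) else 0
      rw [dif_pos hy]; exact h0 _
    · rw [finset_sum_eq V, ← h1]
      exact Finset.sum_congr rfl fun i _ =>
        dite_key V lam (fun y => if h : y ∈ V then lam (V.equivFin ⟨y, h⟩) else 0)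
          (fun y h => dif_pos h) i
    · rw [finset_sum_eq V (fun y => _ • y)]
      exact (Finset.sum_congr rfl fun i _ => by
        rw [dite_key V lam (fun y => if h : y ∈ V then lam (V.equivFin ⟨y, h⟩) else 0)
          (fun y h => dif_pos h) i]).symm

lemma coneSet_finset_eq (R : Finset (Fin n → ℝ)) :
    {y : Fin n → ℝ | ∃ μ : (Fin n → ℝ) → ℝ, (∀ r, 0 ≤ μ r) ∧ y = ∑ r ∈ R, μ r • r} =
      coneOf (fun i : Fin R.card => (R.equivFin.symm i : Fin n → ℝ)) := by
  classical
  ext y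
  simp only [Set.mem_setOf_eq, coneOf]
  constructor
  · rintro ⟨μ, h0, rfl⟩
    exact ⟨fun i => μ ↑(R.equivFin.symm i), fun i => h0 _, finset_sum_eq R fun r => μ r • r⟩
  · rintro ⟨ν, h0, rfl⟩
    refine ⟨fun y => if h : y ∈ R then ν (R.equivFin ⟨y, h⟩) else 0, fun z => ?_, ?_⟩
    · by_cases h : z ∈ R
      · simp only [dif_pos h]; exact h0 _
      · simp [dif_neg h]
    · rw [finset_sum_eq R (fun z => _ • z)]
      exact (Finset.sum_congr rfl fun i _ => by
        rw [dite_key R ν (fun y => if h : y ∈ R then ν (R.equivFin ⟨y, h⟩) else 0)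
          (fun y h => dif_pos h) i]).symm

/-- The Minkowski sum of a finitely generated convex hull and cone is an H-polyhedron. -/
lemma isH_convCone (p q : ℕ) (v : Fin p → (Fin n → ℝ)) (r : Fin q → (Fin n → ℝ)) :
    IsH {x : Fin n → ℝ | ∃ (lam : Fin p → ℝ) (mu : Fin q → ℝ),
      (∀ i, 0 ≤ lam i) ∧ (∑ i, lam i) = 1 ∧ (∀ j, 0 ≤ mu j) ∧
      x = ∑ i, lam i • v i + ∑ j, mu j • r j} := by
  classical
  set F1 : (Fin p → ℝ) × ((Fin q → ℝ) × (Fin n → ℝ)) →ₗ[ℝ] (Fin p → ℝ) := LinearMap.fst ℝ (Fin p → ℝ) ((Fin q → ℝ) × (Fin n → ℝ)) with hF1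
  set Fr : (Fin p → ℝ) × ((Fin q → ℝ) × (Fin n → ℝ)) →ₗ[ℝ] (Fin q → ℝ) × (Fin n → ℝ) := LinearMap.snd ℝ (Fin p → ℝ) ((Fin q → ℝ) × (Fin n → ℝ)) with hFr
  set F2 : (Fin p → ℝ) × ((Fin q → ℝ) × (Fin n → ℝ)) →ₗ[ℝ] (Fin q → ℝ) := (LinearMap.fst ℝ (Fin q → ℝ) (Fin n → ℝ)).comp Fr with hF2
  set F3 : (Fin p → ℝ) × ((Fin q → ℝ) × (Fin n → ℝ)) →ₗ[ℝ] (Fin n → ℝ) := (LinearMap.snd ℝ (Fin q → ℝ) (Fin n → ℝ)).comp Fr with hF3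
  set ssum : (Fin p → ℝ) × ((Fin q → ℝ) × (Fin n → ℝ)) →ₗ[ℝ] ℝ := ∑ i, (LinearMap.proj i).comp F1 with hssum
  set eqf : Fin n → ((Fin p → ℝ) × ((Fin q → ℝ) × (Fin n → ℝ))) →ₗ[ℝ] ℝ := fun l =>
    (LinearMap.proj l).comp F3 - ∑ i, v i l • ((LinearMap.proj i).comp F1)
      - ∑ j, r j l • ((LinearMap.proj j).comp F2) with heqf
  set T : Set ((Fin p → ℝ) × ((Fin q → ℝ) × (Fin n → ℝ))) :=
    (⋂ i, {z | (-((LinearMap.proj i).comp F1)) z ≤ 0}) ∩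
      (({z | ssum z ≤ 1} ∩ {z | (-ssum) z ≤ -1}) ∩
        ((⋂ j, {z | (-((LinearMap.proj j).comp F2)) z ≤ 0}) ∩
          ((⋂ l, {z | eqf l z ≤ 0}) ∩ (⋂ l, {z | (-(eqf l)) z ≤ 0})))) with hT
  have hTH : IsH T :=
    isH_inter (isH_iInter fun i => isH_single _ _)
      (isH_inter (isH_inter (isH_single _ _) (isH_single _ _))
        (isH_inter (isH_iInter fun j => isH_single _ _)
          (isH_inter (isH_iInter fun l => isH_single _ _)
            (isH_iInter fun l => isH_single _ _))))
  have h2 : IsH {px : (Fin q → ℝ) × (Fin n → ℝ) | ∃ lam, (lam, px) ∈ T} := isH_elim_many hTH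
  have h3 : IsH {x : Fin n → ℝ | ∃ mu, (mu, x) ∈
      {px : (Fin q → ℝ) × (Fin n → ℝ) | ∃ lam, (lam, px) ∈ T}} :=
    isH_elim_many h2
  have hset : {x : Fin n → ℝ | ∃ (lam : Fin p → ℝ) (mu : Fin q → ℝ),
      (∀ i, 0 ≤ lam i) ∧ (∑ i, lam i) = 1 ∧ (∀ j, 0 ≤ mu j) ∧
      x = ∑ i, lam i • v i + ∑ j, mu j • r j} =
      {x : Fin n → ℝ | ∃ mu, (mu, x) ∈
        {px : (Fin q → ℝ) × (Fin n → ℝ) | ∃ lam, (lam, px) ∈ T}} := by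
    have happ : ∀ (lam : Fin p → ℝ) (mu : Fin q → ℝ) (l : Fin n),
        (∑ i, lam i • v i + ∑ j, mu j • r j) l
          = ∑ i, v i l * lam i + ∑ j, r j l * mu j := by
      intro lam mu l
      simp only [Pi.add_apply, Finset.sum_apply, Pi.smul_apply, smul_eq_mul]
      congr 1 <;> exact Finset.sum_congr rfl fun k _ => by ring
    ext x
    simp only [Set.mem_setOf_eq, hT, Set.mem_inter_iff, Set.mem_iInter,
      LinearMap.neg_apply, LinearMap.coe_comp, Function.comp_apply, LinearMap.proj_apply,
      hF1, hF2, hF3, hFr, hssum, heqf, LinearMap.fst_apply, LinearMap.snd_apply,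
      LinearMap.sub_apply, LinearMap.coe_sum, Finset.sum_apply, LinearMap.smul_apply,
      smul_eq_mul, neg_nonpos, neg_le, neg_neg, sub_nonpos]
    constructor
    · rintro ⟨lam, mu, h0, h1, hmu, rfl⟩
      refine ⟨mu, lam, h0, ⟨le_of_eq (by rw [h1]), le_of_eq (by rw [h1])⟩, hmu,
        fun l => ?_, fun l => ?_⟩
      · rw [happ lam mu l]; linarith
      · rw [happ lam mu l]; linarith
    · rintro ⟨mu, lam, h0, ⟨hs1, hs2⟩, hmu, hle, hge⟩
      refine ⟨lam, mu, h0, le_antisymm hs1 (by linarith), hmu, funext fun l => ?_⟩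
      have ha := hle l
      have hb := hge l
      rw [happ lam mu l]
      linarith
  rw [hset]
  exact h3

end Main

section Homog

lemma dot_snoc {N : ℕ} (u : Fin N → ℝ) (α : ℝ) (z : Fin (N+1) → ℝ) :
    Fin.snoc u α ⬝ᵥ z = u ⬝ᵥ (fun l => z l.castSucc) + α * z (Fin.last N) := by
  simp [dotProduct, Fin.sum_univ_castSucc]

lemma dot_finset_sum {N : ℕ} {α : Type*} (s : Finset α) (f : α → Fin N → ℝ)
    (a : Fin N → ℝ) : a ⬝ᵥ (∑ e ∈ s, f e) = ∑ e ∈ s, a ⬝ᵥ f e := by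
  simp only [dotProduct, Finset.sum_apply, Finset.mul_sum]
  exact Finset.sum_comm

/-- The H-to-V direction of the Weyl–Minkowski theorem, in dot-product form. -/
lemma mp_dir {n m : ℕ} (a : Fin m → Fin n → ℝ) (b : Fin m → ℝ)
    (hne : {x : Fin n → ℝ | ∀ i, a i ⬝ᵥ x ≤ b i}.Nonempty) :
    ∃ V R : Finset (Fin n → ℝ), V.Nonempty ∧
      {x : Fin n → ℝ | ∀ i, a i ⬝ᵥ x ≤ b i} =
        convexHull ℝ (V : Set (Fin n → ℝ)) +
          {y : Fin n → ℝ | ∃ μ : (Fin n → ℝ) → ℝ,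
            (∀ r, 0 ≤ μ r) ∧ y = ∑ r ∈ R, μ r • r} := by
  classical
  set c : Fin (m+1) → (Fin (n+1) → ℝ) :=
    Fin.snoc (fun i => Fin.snoc (a i) (-(b i))) (Fin.snoc 0 (-1)) with hc
  obtain ⟨q, g, hCg⟩ := cone_fg c
  have hcastone : ∀ x : Fin n → ℝ,
      (fun l : Fin n => (Fin.snoc x (1:ℝ) : Fin (n+1) → ℝ) l.castSucc) = x :=
    fun x => funext fun l => by simp
  have hclast : c (Fin.last m) = Fin.snoc (0 : Fin n → ℝ) (-1) := by
    rw [hc]; exact Fin.snoc_last _ _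
  have hccast : ∀ i : Fin m, c i.castSucc = Fin.snoc (a i) (-(b i)) := by
    intro i; rw [hc]; exact Fin.snoc_castSucc _ _ _
  have hmemC : ∀ x : Fin n → ℝ,
      ((∀ i, c i ⬝ᵥ (Fin.snoc x 1 : Fin (n+1) → ℝ) ≤ 0) ↔ (∀ i, a i ⬝ᵥ x ≤ b i)) := by
    intro x
    constructor
    · intro h i
      have h1 := h i.castSucc
      rw [hccast i, dot_snoc, hcastone, Fin.snoc_last] at h1
      linarith
    · intro h i
      refine Fin.lastCases ?_ ?_ i
      · rw [hclast, dot_snoc, Fin.snoc_last, zero_dotProduct]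
        norm_num
      · intro j
        rw [hccast j, dot_snoc, hcastone, Fin.snoc_last]
        have := h j
        linarith
  have hgC : ∀ k i, c i ⬝ᵥ g k ≤ 0 := by
    intro k i
    have hk : g k ∈ coneOf g := mem_coneOf_self g k
    rw [← hCg] at hk
    exact hk i
  have hglast : ∀ k, 0 ≤ g k (Fin.last n) := by
    intro k
    have h1 := hgC k (Fin.last m)
    rw [hclast, dot_snoc, zero_dotProduct] at h1
    linarith
  set pos := Finset.univ.filter (fun k => 0 < g k (Fin.last n)) with hpos
  set zer := Finset.univ.filter (fun k => ¬ 0 < g k (Fin.last n)) with hzer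
  have hzer0 : ∀ k ∈ zer, g k (Fin.last n) = 0 := fun k hk =>
    le_antisymm (not_lt.mp (by simpa [hzer] using (Finset.mem_filter.mp hk).2)) (hglast k)
  set xpart : Fin q → (Fin n → ℝ) := fun k l => g k l.castSucc with hxp
  set phi : Fin q → (Fin n → ℝ) := fun k => (g k (Fin.last n))⁻¹ • xpart k with hphi
  set V := pos.image phi with hV
  set R := zer.image xpart with hR
  have hsnocphi : ∀ k ∈ pos, (Fin.snoc (phi k) 1 : Fin (n+1) → ℝ)
      = (g k (Fin.last n))⁻¹ • g k := by
    intro k hk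
    have hkpos : 0 < g k (Fin.last n) := (Finset.mem_filter.mp hk).2
    funext l
    refine Fin.lastCases ?_ ?_ l
    · rw [Fin.snoc_last]
      simp [inv_mul_cancel₀ hkpos.ne']
    · intro j
      rw [Fin.snoc_castSucc]
      simp [hphi, hxp]
  have hsnocx : ∀ k ∈ zer, (Fin.snoc (xpart k) 0 : Fin (n+1) → ℝ) = g k := by
    intro k hk
    funext l
    refine Fin.lastCases ?_ ?_ l
    · rw [Fin.snoc_last, hzer0 k hk]
    · intro j
      rw [Fin.snoc_castSucc]
  obtain ⟨x0, hx0⟩ := hne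
  have hx0mem : (Fin.snoc x0 1 : Fin (n+1) → ℝ) ∈ coneOf g := by
    rw [← hCg]; exact (hmemC x0).mpr hx0
  obtain ⟨mu0, hmu00, hmu0e⟩ := hx0mem
  have hone : (1:ℝ) = ∑ k, mu0 k * g k (Fin.last n) := by
    have h1 := congrFun hmu0e (Fin.last n)
    rw [Fin.snoc_last] at h1
    simpa [Finset.sum_apply, Pi.smul_apply, smul_eq_mul] using h1
  have hVne : V.Nonempty := by
    rw [hV]
    refine Finset.Nonempty.image ?_ phi
    by_contra hVe
    rw [Finset.not_nonempty_iff_eq_empty] at hVe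
    have hall : ∀ k, g k (Fin.last n) = 0 := by
      intro k
      by_contra hk
      have h2 : 0 < g k (Fin.last n) := lt_of_le_of_ne (hglast k) (Ne.symm hk)
      have h3 : k ∈ pos := Finset.mem_filter.mpr ⟨Finset.mem_univ k, h2⟩
      rw [hVe] at h3
      exact absurd h3 (Finset.notMem_empty k)
    rw [Finset.sum_congr rfl (fun k _ => by rw [hall k, mul_zero])] at hone
    simp at hone
  refine ⟨V, R, hVne, ?_⟩
  ext x
  simp only [Set.mem_setOf_eq]
  constructor
  · intro hx
    have hxmem : (Fin.snoc x 1 : Fin (n+1) → ℝ) ∈ coneOf g := by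
      rw [← hCg]; exact (hmemC x).mpr hx
    obtain ⟨mu, hmu0, hmue⟩ := hxmem
    have hxl : ∀ l : Fin n, x l = ∑ k, mu k * xpart k l := by
      intro l
      have h1 := congrFun hmue l.castSucc
      rw [Fin.snoc_castSucc] at h1
      simpa [Finset.sum_apply, Pi.smul_apply, smul_eq_mul, hxp] using h1
    have h1 : (1:ℝ) = ∑ k, mu k * g k (Fin.last n) := by
      have h1 := congrFun hmue (Fin.last n)
      rw [Fin.snoc_last] at h1
      simpa [Finset.sum_apply, Pi.smul_apply, smul_eq_mul] using h1
    set w : (Fin n → ℝ) → ℝ :=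
      fun e => ∑ k ∈ pos.filter (fun k => phi k = e), mu k * g k (Fin.last n) with hw
    set nu : (Fin n → ℝ) → ℝ :=
      fun e => ∑ k ∈ zer.filter (fun k => xpart k = e), mu k with hnu
    have hmapsV : ∀ k ∈ pos, phi k ∈ V := fun k hk => Finset.mem_image_of_mem phi hk
    have hmapsR : ∀ k ∈ zer, xpart k ∈ R := fun k hk => Finset.mem_image_of_mem _ hk
    have hzsum : ∑ k ∈ zer, mu k * g k (Fin.last n) = 0 :=
      Finset.sum_eq_zero fun k hk => by rw [hzer0 k hk, mul_zero]
    have hsplit1 : ∑ k ∈ pos, mu k * g k (Fin.last n)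
        + ∑ k ∈ zer, mu k * g k (Fin.last n) = ∑ k, mu k * g k (Fin.last n) := by
      rw [hpos, hzer]
      exact Finset.sum_filter_add_sum_filter_not _ _ _
    have hwsum : ∑ y ∈ V, w y = 1 := by
      rw [hw, Finset.sum_fiberwise_of_maps_to hmapsV (fun k => mu k * g k (Fin.last n))]
      rw [← hsplit1, hzsum] at h1
      linarith
    have hwsmul : ∑ y ∈ V, w y • y = ∑ k ∈ pos, mu k • xpart k := by
      rw [hw]
      have hstep : ∀ y ∈ V,
          (∑ k ∈ pos.filter (fun k => phi k = y), mu k * g k (Fin.last n)) • y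
            = ∑ k ∈ pos.filter (fun k => phi k = y),
                (mu k * g k (Fin.last n)) • phi k := by
        intro y _
        rw [Finset.sum_smul]
        exact Finset.sum_congr rfl fun k hk => by rw [(Finset.mem_filter.mp hk).2]
      rw [Finset.sum_congr rfl hstep,
        Finset.sum_fiberwise_of_maps_to hmapsV (fun k => (mu k * g k (Fin.last n)) • phi k)]
      refine Finset.sum_congr rfl fun k hk => ?_
      have hkpos : 0 < g k (Fin.last n) := (Finset.mem_filter.mp hk).2
      rw [hphi, smul_smul]
      congr 1
      field_simp
    have hnusmul : ∑ y ∈ R, nu y • y = ∑ k ∈ zer, mu k • xpart k := by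
      rw [hnu]
      have hstep : ∀ y ∈ R,
          (∑ k ∈ zer.filter (fun k => xpart k = y), mu k) • y
            = ∑ k ∈ zer.filter (fun k => xpart k = y), mu k • xpart k := by
        intro y _
        rw [Finset.sum_smul]
        exact Finset.sum_congr rfl fun k hk => by rw [(Finset.mem_filter.mp hk).2]
      rw [Finset.sum_congr rfl hstep,
        Finset.sum_fiberwise_of_maps_to hmapsR (fun k => mu k • xpart k)]
    have hxall : x = ∑ k ∈ pos, mu k • xpart k + ∑ k ∈ zer, mu k • xpart k := by
      have hsplit2 : ∑ k ∈ pos, mu k • xpart k + ∑ k ∈ zer, mu k • xpart k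
          = ∑ k, mu k • xpart k := by
        rw [hpos, hzer]
        exact Finset.sum_filter_add_sum_filter_not _ _ _
      rw [hsplit2]
      funext l
      rw [hxl l]
      simp [Finset.sum_apply]
    refine Set.mem_add.mpr ⟨∑ y ∈ V, w y • y, ?_, ∑ y ∈ R, nu y • y, ?_, ?_⟩
    · exact Finset.mem_convexHull'.mpr ⟨w,
        fun y hy => Finset.sum_nonneg fun k hk =>
          mul_nonneg (hmu0 k) (hglast k), hwsum, rfl⟩
    · exact ⟨nu, fun r => Finset.sum_nonneg fun k _ => hmu0 k, rfl⟩
    · rw [hwsmul, hnusmul]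
      exact hxall.symm
  · intro hx
    obtain ⟨xc, hxc, y, hy, rfl⟩ := Set.mem_add.mp hx
    obtain ⟨w, hw0, hw1, hwx⟩ := Finset.mem_convexHull'.mp hxc
    obtain ⟨mu, hmu0, rfl⟩ := hy
    have hkey : (Fin.snoc (xc + ∑ r ∈ R, mu r • r) 1 : Fin (n+1) → ℝ)
        = ∑ e ∈ V, w e • (Fin.snoc e 1 : Fin (n+1) → ℝ)
          + ∑ e ∈ R, mu e • (Fin.snoc e 0 : Fin (n+1) → ℝ) := by
      funext l
      refine Fin.lastCases ?_ ?_ l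
      · simp only [Fin.snoc_last, Pi.add_apply, Finset.sum_apply, Pi.smul_apply,
          Fin.snoc_last, smul_eq_mul, mul_one, mul_zero, Finset.sum_const_zero, add_zero]
        exact hw1.symm
      · intro j
        simp only [Fin.snoc_castSucc, Pi.add_apply, Finset.sum_apply, Pi.smul_apply,
          Fin.snoc_castSucc, smul_eq_mul]
        have hxcj : xc j = ∑ e ∈ V, w e * e j := by
          rw [← hwx]; simp [Finset.sum_apply]
        rw [hxcj]
    have hCall : ∀ i, c i ⬝ᵥ (Fin.snoc (xc + ∑ r ∈ R, mu r • r) 1 : Fin (n+1) → ℝ) ≤ 0 := by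
      intro i
      rw [hkey, dotProduct_add, dot_finset_sum, dot_finset_sum]
      have hVterm : ∀ e ∈ V, c i ⬝ᵥ (w e • (Fin.snoc e 1 : Fin (n+1) → ℝ)) ≤ 0 := by
        intro e he
        obtain ⟨k, hk, rfl⟩ := Finset.mem_image.mp (hV ▸ he)
        rw [dotProduct_smul, hsnocphi k hk, dotProduct_smul, smul_eq_mul, smul_eq_mul]
        exact mul_nonpos_of_nonneg_of_nonpos (hw0 _ he)
          (mul_nonpos_of_nonneg_of_nonpos (inv_nonneg.mpr (hglast k)) (hgC k i))
      have hRterm : ∀ e ∈ R, c i ⬝ᵥ (mu e • (Fin.snoc e 0 : Fin (n+1) → ℝ)) ≤ 0 := by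
        intro e he
        obtain ⟨k, hk, rfl⟩ := Finset.mem_image.mp (hR ▸ he)
        rw [dotProduct_smul, hsnocx k hk, smul_eq_mul]
        exact mul_nonpos_of_nonneg_of_nonpos (hmu0 _) (hgC k i)
      exact add_nonpos (Finset.sum_nonpos hVterm) (Finset.sum_nonpos hRterm)
    exact (hmemC _).mp hCall

end Homog

/-- Weyl–Minkowski theorem: a nonempty set `P ⊆ ℝⁿ` has an H-representation
`P = {x : A·x ≤ b}` iff it has a V-representation as the Minkowski sum of the convex hull
of a nonempty finite set of points and the conical hull (set of nonnegative linear
combinations) of a finite set of rays. -/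
theorem stmt3 (n : ℕ) (P : Set (Fin n → ℝ)) (hP : P.Nonempty) :
    (∃ (m : ℕ) (A : Matrix (Fin m) (Fin n) ℝ) (b : Fin m → ℝ),
        P = {x : Fin n → ℝ | ∀ i, A.mulVec x i ≤ b i}) ↔
    (∃ (V R : Finset (Fin n → ℝ)), V.Nonempty ∧
        P = convexHull ℝ (V : Set (Fin n → ℝ)) +
            {y : Fin n → ℝ | ∃ μ : (Fin n → ℝ) → ℝ,
              (∀ r, 0 ≤ μ r) ∧ y = ∑ r ∈ R, μ r • r}) := by
  constructor
  · rintro ⟨m, A, b, hPeq⟩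
    have hPdot : P = {x : Fin n → ℝ | ∀ i, (fun i => A i) i ⬝ᵥ x ≤ b i} := hPeq
    have hne : {x : Fin n → ℝ | ∀ i, (fun i => A i) i ⬝ᵥ x ≤ b i}.Nonempty := hPdot ▸ hP
    obtain ⟨V, R, hVne, hrep⟩ := mp_dir (fun i => A i) b hne
    exact ⟨V, R, hVne, hPdot.trans hrep⟩
  · rintro ⟨V, R, hVne, hPeq⟩
    have hPQ : P = {x : Fin n → ℝ | ∃ (lam : Fin V.card → ℝ) (mu : Fin R.card → ℝ),
        (∀ i, 0 ≤ lam i) ∧ (∑ i, lam i) = 1 ∧ (∀ j, 0 ≤ mu j) ∧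
        x = ∑ i, lam i • (V.equivFin.symm i : Fin n → ℝ)
          + ∑ j, mu j • (R.equivFin.symm j : Fin n → ℝ)} := by
      rw [hPeq, convexHull_finset_eq, coneSet_finset_eq]
      ext x
      simp only [Set.mem_add, Set.mem_setOf_eq, coneOf]
      constructor
      · rintro ⟨u, ⟨lam, h0, h1, rfl⟩, z, ⟨mu, hm, rfl⟩, rfl⟩
        exact ⟨lam, mu, h0, h1, hm, rfl⟩
      · rintro ⟨lam, mu, h0, h1, hm, rfl⟩
        exact ⟨_, ⟨lam, h0, h1, rfl⟩, _, ⟨mu, hm, rfl⟩, rfl⟩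
    have hH : IsH P := by
      rw [hPQ]
      exact isH_convCone V.card R.card _ _
    obtain ⟨m, a, b, hab⟩ := isH_to_dot hH
    exact ⟨m, Matrix.of a, b, hab⟩
end

section
/- (Bounded Weyl–Minkowski / polytopes are bounded polyhedra.) A set P ⊆ ℝⁿ is the convex hull of some nonempty finite set V ⊆ ℝⁿ if and only if P is nonempty, bounded, and there exist m ∈ ℕ, a real m×n matrix A and b ∈ ℝ^m such that P = {x ∈ ℝⁿ : A·x ≤ b}. -/
/-!
A polytope `conv V` is the image of the standard simplex under the linear map `w ↦ ∑ wᵥ • v`,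
i.e. the projection of a polyhedron in a space with auxiliary coordinates; Fourier–Motzkin
elimination removes those coordinates one at a time, so it is a polyhedron. Conversely, an extreme
point of `{x | ∀ i, fᵢ x ≤ bᵢ}` is determined by its set of tight constraints, so there are finitely
many; when the polyhedron is compact, Krein–Milman makes it the convex hull of them.
-/

open Matrix Set

theorem Finite.exists_between_of_forall_le {α ι κ : Type*} [LinearOrder α] [Nonempty α] [Finite ι]
    [Finite κ] {l : ι → α} {u : κ → α} (h : ∀ i j, l i ≤ u j) :
    ∃ t, (∀ i, l i ≤ t) ∧ ∀ j, t ≤ u j := by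
  rcases isEmpty_or_nonempty ι with hι | hι
  · rcases isEmpty_or_nonempty κ with hκ | hκ
    · exact ⟨Classical.arbitrary α, isEmptyElim, isEmptyElim⟩
    · obtain ⟨j₀, hj₀⟩ := Finite.exists_min u
      exact ⟨u j₀, isEmptyElim, hj₀⟩
  · obtain ⟨i₀, hi₀⟩ := Finite.exists_max l
    exact ⟨l i₀, hi₀, h i₀⟩

section LinearOrderedField

variable {𝕜 : Type*} [Field 𝕜] [LinearOrder 𝕜] [IsStrictOrderedRing 𝕜]

/-- One-variable Fourier–Motzkin elimination. -/
theorem exists_forall_mul_le_iff {ι : Type*} [Finite ι] {c d : ι → 𝕜} :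
    (∃ t, ∀ i, c i * t ≤ d i) ↔
      (∀ i, c i = 0 → 0 ≤ d i) ∧ ∀ i j, 0 < c i → c j < 0 → 0 ≤ -c j * d i + c i * d j := by
  constructor
  · rintro ⟨t, ht⟩
    refine ⟨fun i hi => by simpa [hi] using ht i, fun i j hi hj => ?_⟩
    nlinarith [mul_le_mul_of_nonneg_left (ht i) (neg_nonneg.2 hj.le),
      mul_le_mul_of_nonneg_left (ht j) hi.le]
  · rintro ⟨hzero, hpair⟩
    obtain ⟨t, hlo, hup⟩ := Finite.exists_between_of_forall_le
      (l := fun j : {j // c j < 0} => d j / c j) (u := fun i : {i // 0 < c i} => d i / c i)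
      fun j i => by
        rw [div_le_iff_of_neg j.2, div_mul_eq_mul_div, div_le_iff₀ i.2]
        linarith [hpair i j i.2 j.2]
    refine ⟨t, fun i => ?_⟩
    rcases lt_trichotomy (c i) 0 with hi | hi | hi
    · exact (div_le_iff_of_neg' hi).1 (hlo ⟨i, hi⟩)
    · simpa [hi] using hzero i hi
    · exact (le_div_iff₀' hi).1 (hup ⟨i, hi⟩)

theorem exists_pos_forall_le_mul {ι : Type*} [Finite ι] {d s : ι → 𝕜} (hs : ∀ i, 0 ≤ s i)
    (hd : ∀ i, s i = 0 → d i ≤ 0) : ∃ M, 0 < M ∧ ∀ i, d i ≤ M * s i := by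
  obtain ⟨M, hM⟩ := Finite.exists_le fun i => d i / s i
  refine ⟨max M 1, by positivity, fun i => ?_⟩
  rcases (hs i).eq_or_lt with h | h
  · rw [← h, mul_zero]; exact hd i h.symm
  · calc d i = d i / s i * s i := (div_mul_cancel₀ _ h.ne').symm
      _ ≤ max M 1 * s i := by gcongr; exact (hM i).trans (le_max_left _ _)

end LinearOrderedField

section OrderedCommRing

variable (𝕜 : Type*) [CommRing 𝕜] [PartialOrder 𝕜]
variable {E F : Type*} [AddCommGroup E] [Module 𝕜 E] [AddCommGroup F] [Module 𝕜 F]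

def IsPolyhedral (S : Set E) : Prop :=
  ∃ (m : ℕ) (f : Fin m → Module.Dual 𝕜 E) (b : Fin m → 𝕜), S = {x | ∀ i, f i x ≤ b i}

variable {𝕜}

theorem isPolyhedral_of_finite {ι : Type*} [Finite ι] (f : ι → Module.Dual 𝕜 E) (b : ι → 𝕜) :
    IsPolyhedral 𝕜 {x | ∀ i, f i x ≤ b i} := by
  obtain ⟨m, ⟨e⟩⟩ := Finite.exists_equiv_fin ι
  exact ⟨m, f ∘ e.symm, b ∘ e.symm, by simp [e.symm.forall_congr_left]⟩

namespace IsPolyhedral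

theorem inter {S T : Set E} (hS : IsPolyhedral 𝕜 S) (hT : IsPolyhedral 𝕜 T) :
    IsPolyhedral 𝕜 (S ∩ T) := by
  obtain ⟨m, f, b, rfl⟩ := hS
  obtain ⟨k, g, c, rfl⟩ := hT
  convert isPolyhedral_of_finite (Sum.elim f g) (Sum.elim b c) using 1
  ext x
  simp [Sum.forall]

theorem preimage {S : Set F} (hS : IsPolyhedral 𝕜 S) (L : E →ₗ[𝕜] F) :
    IsPolyhedral 𝕜 (L ⁻¹' S) := by
  obtain ⟨m, f, b, rfl⟩ := hS
  exact ⟨m, fun i => f i ∘ₗ L, b, rfl⟩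

theorem convex [IsOrderedRing 𝕜] {S : Set E} (hS : IsPolyhedral 𝕜 S) : Convex 𝕜 S := by
  obtain ⟨m, f, b, rfl⟩ := hS
  simpa only [ofPred_forall] using convex_iInter fun i => convex_halfSpace_le (f i).isLinear (b i)

end IsPolyhedral

theorem isPolyhedral_iff_exists_matrix {n : ℕ} {S : Set (Fin n → 𝕜)} :
    IsPolyhedral 𝕜 S ↔ ∃ (m : ℕ) (A : Matrix (Fin m) (Fin n) 𝕜) (b : Fin m → 𝕜),
      S = {x | ∀ i, A.mulVec x i ≤ b i} := by
  constructor
  · rintro ⟨m, f, b, rfl⟩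
    exact ⟨m, LinearMap.toMatrix' (LinearMap.pi f), b, by simp [LinearMap.toMatrix'_mulVec]⟩
  · rintro ⟨m, A, b, rfl⟩
    exact ⟨m, fun i => LinearMap.proj i ∘ₗ A.mulVecLin, b, rfl⟩

variable (𝕜) in
theorem isPolyhedral_stdSimplex [IsOrderedRing 𝕜] (ι : Type*) [Fintype ι] :
    IsPolyhedral 𝕜 (stdSimplex 𝕜 ι) := by
  let total : Module.Dual 𝕜 (ι → 𝕜) := ∑ i, LinearMap.proj i
  convert isPolyhedral_of_finite (Sum.elim (fun i => -LinearMap.proj i) ![total, -total])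
    (Sum.elim 0 ![1, -1]) using 1
  ext w
  simp [stdSimplex, Sum.forall, Fin.forall_fin_two, total, le_antisymm_iff, neg_le_neg_iff]

end OrderedCommRing

section LinearOrderedField

variable {𝕜 : Type*} [Field 𝕜] [LinearOrder 𝕜] [IsStrictOrderedRing 𝕜]
variable {E F : Type*} [AddCommGroup E] [Module 𝕜 E] [AddCommGroup F] [Module 𝕜 F]

theorem isPolyhedral_singleton_zero [FiniteDimensional 𝕜 E] : IsPolyhedral 𝕜 ({0} : Set E) := by
  let v := Module.finBasis 𝕜 E
  convert isPolyhedral_of_finite (Sum.elim v.coord fun i => -v.coord i) (fun _ => 0) using 1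
  ext x
  simp only [mem_singleton_iff, ← v.forall_coord_eq_zero_iff, mem_ofPred_eq, Sum.forall,
    Sum.elim_inl, Sum.elim_inr, LinearMap.neg_apply, neg_nonpos, ← forall_and, le_antisymm_iff]

theorem IsPolyhedral.image_fst {S : Set (E × 𝕜)} (hS : IsPolyhedral 𝕜 S) :
    IsPolyhedral 𝕜 (Prod.fst '' S) := by
  obtain ⟨m, f, b, rfl⟩ := hS
  let a i := f i ∘ₗ LinearMap.inl 𝕜 E 𝕜
  let c i := f i (0, 1)
  have hf i y t : f i (y, t) = a i y + c i * t := by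
    have : ((y, t) : E × 𝕜) = (y, 0) + t • (0, 1) := by simp
    rw [this, map_add, map_smul, smul_eq_mul, mul_comm]
    rfl
  convert (isPolyhedral_of_finite (fun i : {i // c i = 0} => a i) (fun i => b i)).inter
    (isPolyhedral_of_finite (fun p : {p : Fin m × Fin m // 0 < c p.1 ∧ c p.2 < 0} =>
      -c p.1.2 • a p.1.1 + c p.1.1 • a p.1.2) fun p => -c p.1.2 * b p.1.1 + c p.1.1 * b p.1.2)
    using 1
  ext y
  simp only [mem_image, mem_ofPred_eq, Prod.exists, exists_and_right, exists_eq_right, hf,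
    ← le_sub_iff_add_le', exists_forall_mul_le_iff, mem_inter_iff, Subtype.forall, Prod.forall,
    LinearMap.add_apply, LinearMap.smul_apply, smul_eq_mul, sub_nonneg, and_imp]
  refine and_congr Iff.rfl (forall₄_congr fun i j hi hj => ?_)
  constructor <;> intro h <;> linarith

theorem IsPolyhedral.image_fst_of_finite {ι : Type*} [Finite ι] {S : Set (E × (ι → 𝕜))}
    (hS : IsPolyhedral 𝕜 S) : IsPolyhedral 𝕜 (Prod.fst '' S) := by
  refine Finite.induction_empty_option
    (P := fun ι => ∀ S : Set (E × (ι → 𝕜)), IsPolyhedral 𝕜 S → IsPolyhedral 𝕜 (Prod.fst '' S))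
    (fun {α β} e ih S hS => ?_) (fun S hS => ?_) (fun {α} _ ih S hS => ?_) ι S hS
  · let Φ := (LinearEquiv.refl 𝕜 E).prodCongr (LinearEquiv.funCongrLeft 𝕜 𝕜 e.symm)
    convert ih _ (hS.preimage Φ.toLinearMap) using 1
    rw [LinearEquiv.coe_toLinearMap, ← Φ.image_symm_eq_preimage, image_image]
    rfl
  · convert hS.preimage (LinearMap.inl 𝕜 E _) using 1
    ext y
    refine ⟨?_, fun h => ⟨_, h, rfl⟩⟩
    rintro ⟨⟨y, w⟩, hw, rfl⟩
    rwa [Subsingleton.elim w 0] at hw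
  · let Φ := (LinearEquiv.prodAssoc 𝕜 E (α → 𝕜) 𝕜).trans ((LinearEquiv.refl 𝕜 E).prodCongr
      ((LinearEquiv.prodComm 𝕜 _ 𝕜).trans (LinearEquiv.piOptionEquivProd 𝕜 (M := fun _ => 𝕜)).symm))
    convert ih _ (hS.preimage Φ.toLinearMap).image_fst using 1
    rw [LinearEquiv.coe_toLinearMap, ← Φ.image_symm_eq_preimage, image_image, image_image]
    rfl

theorem IsPolyhedral.image [FiniteDimensional 𝕜 E] [FiniteDimensional 𝕜 F] {S : Set E}
    (hS : IsPolyhedral 𝕜 S) (L : E →ₗ[𝕜] F) : IsPolyhedral 𝕜 (L '' S) := by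
  let e := (Module.finBasis 𝕜 E).equivFun
  let fst := LinearMap.fst 𝕜 F (Fin (Module.finrank 𝕜 E) → 𝕜)
  let snd := LinearMap.snd 𝕜 F (Fin (Module.finrank 𝕜 E) → 𝕜)
  have hgraph : L '' S = Prod.fst ''
      ((e.symm.toLinearMap ∘ₗ snd) ⁻¹' S ∩ (L ∘ₗ e.symm.toLinearMap ∘ₗ snd - fst) ⁻¹' {0}) := by
    ext y
    constructor
    · rintro ⟨x, hx, rfl⟩
      exact ⟨(L x, e x), ⟨by simpa [snd] using hx, by simp [fst, snd]⟩, rfl⟩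
    · rintro ⟨⟨y, w⟩, ⟨hw, hy⟩, rfl⟩
      exact ⟨e.symm w, hw, by simpa [fst, snd, sub_eq_zero] using hy⟩
  rw [hgraph]
  exact ((hS.preimage _).inter (isPolyhedral_singleton_zero.preimage _)).image_fst_of_finite

theorem Set.Finite.isPolyhedral_convexHull [FiniteDimensional 𝕜 E] {s : Set E} (hs : s.Finite) :
    IsPolyhedral 𝕜 (convexHull 𝕜 s) := by
  let := hs.fintype
  rw [hs.convexHull_eq_image]
  exact (isPolyhedral_stdSimplex 𝕜 s).image (F := E) _

/-- If `y` is tight wherever `x` is, the polyhedron contains a point beyond `x` on the ray from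
`y`, so `x` lies inside a segment of it. -/
theorem eq_of_mem_extremePoints_of_forall_eq {ι : Type*} [Finite ι] {f : ι → Module.Dual 𝕜 E}
    {b : ι → 𝕜} {x y : E} (hx : x ∈ {z | ∀ i, f i z ≤ b i}.extremePoints 𝕜)
    (hy : ∀ i, f i y ≤ b i) (hxy : ∀ i, f i x = b i → f i y = b i) : x = y := by
  obtain ⟨M, hM, hle⟩ := exists_pos_forall_le_mul (d := fun i => f i x - f i y)
    (fun i => sub_nonneg.2 (hx.1 i)) fun i hi => by
      rw [hxy i (sub_eq_zero.1 hi).symm, (sub_eq_zero.1 hi).symm, sub_self]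
  have hz : ∀ i, f i (x + M⁻¹ • (x - y)) ≤ b i := fun i => by
    have := (inv_mul_le_iff₀ hM).2 (hle i)
    simp only [map_add, map_smul, map_sub, smul_eq_mul]
    linarith
  have hseg : x ∈ openSegment 𝕜 y (x + M⁻¹ • (x - y)) := by
    refine ⟨1 / (M + 1), M / (M + 1), by positivity, by positivity, by field_simp; ring, ?_⟩
    match_scalars <;> field_simp
    ring
  exact ((mem_extremePoints.1 hx).2 y hy _ hz hseg).1.symm

theorem IsPolyhedral.finite_extremePoints {S : Set E} (hS : IsPolyhedral 𝕜 S) :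
    (S.extremePoints 𝕜).Finite := by
  obtain ⟨m, f, b, rfl⟩ := hS
  refine Set.Finite.of_finite_image (f := fun x => {i | f i x = b i}) (Set.toFinite _)
    fun x hx y hy hxy => eq_of_mem_extremePoints_of_forall_eq hx hy.1 fun i hi => ?_
  exact (Set.ext_iff.1 hxy i).1 hi

end LinearOrderedField

section Real

variable {E : Type*} [AddCommGroup E] [Module ℝ E] [TopologicalSpace E] [T2Space E]
  [IsTopologicalAddGroup E] [ContinuousSMul ℝ E] {S : Set E}

theorem IsPolyhedral.isClosed [FiniteDimensional ℝ E] (hS : IsPolyhedral ℝ S) : IsClosed S := by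
  obtain ⟨m, f, b, rfl⟩ := hS
  simpa only [ofPred_forall] using
    isClosed_iInter fun i => isClosed_le (f i).continuous_of_finiteDimensional continuous_const

theorem IsPolyhedral.convexHull_extremePoints [LocallyConvexSpace ℝ E] (hS : IsPolyhedral ℝ S)
    (hc : IsCompact S) : convexHull ℝ (S.extremePoints ℝ) = S := by
  have := closure_convexHull_extremePoints hc hS.convex
  rwa [(hS.finite_extremePoints.isCompact_convexHull (𝕜 := ℝ)).isClosed.closure_eq] at this

end Real

/-- Bounded Weyl–Minkowski: `P ⊆ ℝⁿ` is the convex hull of a nonempty finite set iff `P` is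
nonempty, bounded, and is a polyhedron `{x : A·x ≤ b}` for some matrix `A` and vector `b`. -/
theorem stmt4 (n : ℕ) (P : Set (Fin n → ℝ)) :
    (∃ V : Finset (Fin n → ℝ), V.Nonempty ∧ P = convexHull ℝ (V : Set (Fin n → ℝ))) ↔
    (P.Nonempty ∧ Bornology.IsBounded P ∧
      ∃ (m : ℕ) (A : Matrix (Fin m) (Fin n) ℝ) (b : Fin m → ℝ),
        P = {x : Fin n → ℝ | ∀ i, A.mulVec x i ≤ b i}) := by
  rw [← isPolyhedral_iff_exists_matrix]
  constructor
  · rintro ⟨V, hV, rfl⟩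
    exact ⟨convexHull_nonempty_iff.2 hV, (V.finite_toSet.isCompact_convexHull (𝕜 := ℝ)).isBounded,
      V.finite_toSet.isPolyhedral_convexHull⟩
  · rintro ⟨hne, hbdd, hP⟩
    have hc : IsCompact P := Metric.isCompact_of_isClosed_isBounded hP.isClosed hbdd
    refine ⟨hP.finite_extremePoints.toFinset, ?_, ?_⟩
    · simpa using hc.extremePoints_nonempty hne
    · rw [Set.Finite.coe_toFinset, hP.convexHull_extremePoints hc]
end
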